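/- arXiv:1607.04751 — 4 statements merged into one kernel-verified Lean document; each statement's English description precedes it below -/
import Mathlib

section
/- Let A ∈ ℝ^{p×p} and Ω ∈ ℝ^{n×n} be positive definite and Φ ∈ ℝ^{n×p}. If y₁ has covariance A⁻¹, y₂ has covariance Ω⁻¹, and y₁, y₂ are independent, then the linear combination β = y₁ − A⁻¹ Φᵀ (Ω⁻¹ + Φ A⁻¹ Φᵀ)⁻¹ (Φ y₁ + y₂) has covariance matrix equal to (A + Φᵀ Ω Φ)⁻¹. Formulated as a matrix identity: with M = A⁻¹ Φᵀ (Ω⁻¹ + Φ A⁻¹ Φᵀ)⁻¹, one has (I − MΦ) A⁻¹ (I − MΦ)ᵀ + M Ω⁻¹ Mᵀ = (A + Φᵀ Ω Φ)⁻¹. -/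
open Matrix

theorem stmt_10 {n p : ℕ}
    (A : Matrix (Fin p) (Fin p) ℝ) (hA : A.PosDef)
    (Ω : Matrix (Fin n) (Fin n) ℝ) (hΩ : Ω.PosDef)
    (Φ : Matrix (Fin n) (Fin p) ℝ)
    (M : Matrix (Fin p) (Fin n) ℝ)
    (hM : M = A⁻¹ * Φᵀ * (Ω⁻¹ + Φ * A⁻¹ * Φᵀ)⁻¹) :
    (1 - M * Φ) * A⁻¹ * (1 - M * Φ)ᵀ + M * Ω⁻¹ * Mᵀ = (A + Φᵀ * Ω * Φ)⁻¹ := by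
  have hT : ∀ {a b : ℕ} (X : Matrix (Fin a) (Fin b) ℝ), Xᴴ = Xᵀ := fun X => rfl
  set S : Matrix (Fin n) (Fin n) ℝ := Ω⁻¹ + Φ * A⁻¹ * Φᵀ with hSdef
  have hS : S.PosDef := by
    refine hΩ.inv.add_posSemidef ?_
    have := hA.inv.posSemidef.mul_mul_conjTranspose_same Φ
    rwa [hT] at this
  have hA1 : A⁻¹ * A = 1 := A.nonsing_inv_mul hA.det_pos.ne'.isUnit
  have hS1 : S⁻¹ * S = 1 := S.nonsing_inv_mul hS.det_pos.ne'.isUnit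
  have hΩ1 : Ω⁻¹ * Ω = 1 := Ω.nonsing_inv_mul hΩ.det_pos.ne'.isUnit
  have hAinvT : (A⁻¹)ᵀ = A⁻¹ := by rw [← hT]; exact hA.inv.isHermitian
  have hSinvT : (S⁻¹)ᵀ = S⁻¹ := by rw [← hT]; exact hS.inv.isHermitian
  have hMS : M * S = A⁻¹ * Φᵀ := by
    rw [hM, Matrix.mul_assoc, hS1, Matrix.mul_one]
  have key : M * Φ * A⁻¹ * Φᵀ = A⁻¹ * Φᵀ - M * Ω⁻¹ := by
    rw [eq_sub_iff_add_eq, ← hMS, hSdef, Matrix.mul_add]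
    simp only [← Matrix.mul_assoc]
    abel
  have hMΩ : M * Ω⁻¹ * Ω = M := by rw [Matrix.mul_assoc, hΩ1, Matrix.mul_one]
  have hMA : M * Φ * A⁻¹ * A = M * Φ := by rw [Matrix.mul_assoc, hA1, Matrix.mul_one]
  have e1 : (1 - M * Φ) * A⁻¹ * (1 - M * Φ)ᵀ + M * Ω⁻¹ * Mᵀ
      = A⁻¹ - M * Φ * A⁻¹ := by
    rw [transpose_sub, transpose_one, transpose_mul]
    simp only [Matrix.sub_mul, Matrix.mul_sub, Matrix.one_mul, Matrix.mul_one,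
      ← Matrix.mul_assoc]
    rw [key]
    have hMtA : A⁻¹ * Φᵀ * Mᵀ = M * Φ * A⁻¹ := by
      rw [hM]
      simp only [transpose_mul, hAinvT, hSinvT, transpose_transpose, ← Matrix.mul_assoc]
    simp only [Matrix.sub_mul, hMtA]
    abel
  have e2 : (A⁻¹ - M * Φ * A⁻¹) * (A + Φᵀ * Ω * Φ) = 1 := by
    simp only [Matrix.sub_mul, Matrix.mul_add, ← Matrix.mul_assoc]
    rw [hA1, hMA, key]
    simp only [Matrix.sub_mul, hMΩ]
    abel
  rw [e1, Matrix.inv_eq_left_inv e2]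
end

section
/- Let Σ be a k×k positive definite matrix, G a k₂×k matrix of full row rank, H = (H₁, H₂) an invertible k×k matrix with G H₁ = 0. Then the (1,2) block of Λ = Hᵀ Σ⁻¹ H, namely Λ₁₂ = H₁ᵀ Σ⁻¹ H₂, is zero if and only if H₂ = Σ Gᵀ M for some matrix M ∈ ℝ^{k₂×k₂} (necessarily of full rank since H is invertible). -/
/-!
Since `G H₁ = 0` and both `H₁` and `Gᵀ` have independent columns, the square matrix `[H₁ Gᵀ]`
is invertible: applying `G` to `H₁ a + Gᵀ b = 0` gives `G Gᵀ b = 0`, hence `Gᵀ b = 0`.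
Writing any `X` as `H₁ P + Gᵀ B` and using `H₁ᵀ Gᵀ = (G H₁)ᵀ = 0` gives `H₁ᵀ X = H₁ᵀ H₁ P`, so the
kernel of `H₁ᵀ` is exactly the column space of `Gᵀ`. Applied to `X = Σ⁻¹ H₂` this is the claim,
and `M` is invertible because `H₂ = Σ Gᵀ M` has independent columns.
-/

open Matrix

namespace Matrix

variable {l m n p K : Type*} [Fintype m] [Fintype n] [Field K]

theorem mulVec_injective_transpose_of_rank_eq {G : Matrix m n K}
    (hG : G.rank = Fintype.card m) : Function.Injective Gᵀ.mulVec := by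
  rw [mulVec_injective_iff, col_transpose, linearIndependent_iff_card_eq_finrank_span,
    Set.finrank, ← rank_eq_finrank_span_row, hG]

section Square

variable [DecidableEq m] [DecidableEq n]

theorem mulVec_injective_of_isUnit_fromCols_left {A : Matrix (m ⊕ n) m K}
    {B : Matrix (m ⊕ n) n K} (h : IsUnit (fromCols A B)) : Function.Injective A.mulVec := by
  intro u v huv
  have := mulVec_injective_iff_isUnit.2 h (a₁ := Sum.elim u 0) (a₂ := Sum.elim v 0)
    (by simp [huv])
  exact (Sum.elim_eq_iff.1 this).1

theorem mulVec_injective_of_isUnit_fromCols_right {A : Matrix (m ⊕ n) m K}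
    {B : Matrix (m ⊕ n) n K} (h : IsUnit (fromCols A B)) : Function.Injective B.mulVec := by
  intro u v huv
  have := mulVec_injective_iff_isUnit.2 h (a₁ := Sum.elim 0 u) (a₂ := Sum.elim 0 v)
    (by simp [huv])
  exact (Sum.elim_eq_iff.1 this).2

theorem isUnit_of_mulVec_injective_mul (A : Matrix l n K) {M : Matrix n n K}
    (h : Function.Injective (A * M).mulVec) : IsUnit M := by
  rw [← mulVec_injective_iff_isUnit]
  refine Function.Injective.of_comp (f := A.mulVec) ?_
  simpa only [Function.comp_def, mulVec_mulVec] using h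

variable [LinearOrder K] [IsStrictOrderedRing K]

theorem isUnit_transpose_mul_self [Fintype l] {A : Matrix l m K}
    (hA : Function.Injective A.mulVec) : IsUnit (Aᵀ * A) := by
  rw [← mulVec_injective_iff_isUnit, ← coe_mulVecLin, ← LinearMap.ker_eq_bot,
    ker_mulVecLin_transpose_mul_self, LinearMap.ker_eq_bot, coe_mulVecLin]
  exact hA

theorem isUnit_fromCols_transpose_of_mul_eq_zero {A : Matrix (m ⊕ n) m K}
    {G : Matrix n (m ⊕ n) K} (hA : Function.Injective A.mulVec)
    (hG : Function.Injective Gᵀ.mulVec) (hGA : G * A = 0) : IsUnit (fromCols A Gᵀ) := by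
  rw [← mulVec_injective_iff_isUnit, ← coe_mulVecLin, injective_iff_map_eq_zero]
  intro v hv
  rw [← Sum.elim_comp_inl_inr v, mulVecLin_apply, fromCols_mulVec_sumElim] at hv
  have hGGb : (Gᵀᵀ * Gᵀ) *ᵥ (v ∘ Sum.inr) = 0 := by
    simpa [mulVec_add, mulVec_mulVec, hGA] using congrArg (G *ᵥ ·) hv
  have hb : Gᵀ *ᵥ (v ∘ Sum.inr) = 0 :=
    (SetLike.ext_iff.1 (ker_mulVecLin_transpose_mul_self Gᵀ) _).1 hGGb
  have ha : A *ᵥ (v ∘ Sum.inl) = 0 := by rwa [hb, add_zero] at hv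
  rw [← Sum.elim_comp_inl_inr v, hA.eq_iff' (mulVec_zero _) |>.1 ha,
    hG.eq_iff' (mulVec_zero _) |>.1 hb, Sum.elim_zero_zero]

theorem transpose_mul_eq_zero_iff_exists_eq_transpose_mul {A : Matrix (m ⊕ n) m K}
    {G : Matrix n (m ⊕ n) K} (hA : Function.Injective A.mulVec)
    (hG : Function.Injective Gᵀ.mulVec) (hGA : G * A = 0) (X : Matrix (m ⊕ n) p K) :
    Aᵀ * X = 0 ↔ ∃ B : Matrix n p K, X = Gᵀ * B := by
  have hAG : Aᵀ * Gᵀ = 0 := by rw [← transpose_mul, hGA, transpose_zero]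
  constructor
  · intro hX
    have hL := (isUnit_fromCols_transpose_of_mul_eq_zero hA hG hGA).map detMonoidHom
    obtain ⟨W, rfl⟩ : ∃ W, X = fromCols A Gᵀ * W :=
      ⟨(fromCols A Gᵀ)⁻¹ * X, (mul_nonsing_inv_cancel_left _ _ hL).symm⟩
    rw [← fromRows_toRows W, fromCols_mul_fromRows] at hX ⊢
    rw [Matrix.mul_add, ← Matrix.mul_assoc, ← Matrix.mul_assoc, hAG, Matrix.zero_mul,
      add_zero] at hX
    have hW₁ : W.toRows₁ = 0 := by
      rw [← nonsing_inv_mul_cancel_left (A := Aᵀ * A) W.toRows₁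
        ((isUnit_transpose_mul_self hA).map detMonoidHom), hX, Matrix.mul_zero]
    exact ⟨W.toRows₂, by rw [hW₁, Matrix.mul_zero, zero_add]⟩
  · rintro ⟨B, rfl⟩
    rw [← Matrix.mul_assoc, hAG, Matrix.zero_mul]

end Square

end Matrix

theorem stmt_16 {k₁ k₂ : ℕ}
    (S : Matrix (Fin k₁ ⊕ Fin k₂) (Fin k₁ ⊕ Fin k₂) ℝ) (hS : S.PosDef)
    (G : Matrix (Fin k₂) (Fin k₁ ⊕ Fin k₂) ℝ) (hG : G.rank = k₂)
    (H₁ : Matrix (Fin k₁ ⊕ Fin k₂) (Fin k₁) ℝ)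
    (H₂ : Matrix (Fin k₁ ⊕ Fin k₂) (Fin k₂) ℝ)
    (hH : IsUnit (fromCols H₁ H₂))
    (hGH₁ : G * H₁ = 0) :
    H₁ᵀ * S⁻¹ * H₂ = 0 ↔
      ∃ M : Matrix (Fin k₂) (Fin k₂) ℝ, IsUnit M ∧ H₂ = S * Gᵀ * M := by
  have hS' : IsUnit S.det := hS.isUnit.map detMonoidHom
  have hGT := mulVec_injective_transpose_of_rank_eq (hG.trans (Fintype.card_fin k₂).symm)
  rw [Matrix.mul_assoc, transpose_mul_eq_zero_iff_exists_eq_transpose_mul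
    (mulVec_injective_of_isUnit_fromCols_left hH) hGT hGH₁]
  constructor
  · rintro ⟨M, hM⟩
    have hH₂ : H₂ = S * Gᵀ * M := by
      rw [Matrix.mul_assoc, ← hM, mul_nonsing_inv_cancel_left _ _ hS']
    exact ⟨M, isUnit_of_mulVec_injective_mul (S * Gᵀ)
      (hH₂ ▸ mulVec_injective_of_isUnit_fromCols_right hH), hH₂⟩
  · rintro ⟨M, -, rfl⟩
    exact ⟨M, by rw [Matrix.mul_assoc, nonsing_inv_mul_cancel_left _ _ hS']⟩
end

section
/- Let Σ be a k×k positive definite matrix, G a k₂×k matrix of full row rank, H₁ ∈ ℝ^{k×k₁} whose columns form a basis of ker(G) (k₁ = k − k₂), and M ∈ ℝ^{k₂×k₂} invertible. If C ∈ ℝ^{k×k} satisfies C H₁ = 0 and C Σ Gᵀ M = Σ Gᵀ M, then C = Σ Gᵀ (G Σ Gᵀ)⁻¹ G. -/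
/-!
With `P = S Gᵀ (G S Gᵀ)⁻¹ G`, both `C` and `P` kill the columns of `H₁` and fix the columns of
`S Gᵀ` (for `C`, cancel the invertible `M`). These columns span `ℝᵏ`: a vector `H₁ a = S Gᵀ b` in
both column spaces satisfies `G S Gᵀ b = G H₁ a = 0`, so it vanishes because `G S Gᵀ` is positive
definite, and the two column spaces have dimensions `k₁ + k₂ = k`. Hence `C = P`.
-/

open Matrix

namespace Matrix

variable {R l n m₁ m₂ p : Type*} [Fintype n] [Fintype m₁] [Fintype m₂]

theorem vecMul_injective_of_rank_eq_card [Field R] [Fintype p] {A : Matrix p n R}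
    (hA : A.rank = Fintype.card p) : Function.Injective A.vecMul := by
  rw [vecMul_injective_iff, linearIndependent_iff_card_eq_finrank_span, ← hA,
    rank_eq_finrank_span_row, Set.finrank]

theorem eq_of_mul_eq_mul_of_range_sup_eq_top [CommSemiring R] {C D : Matrix l n R}
    {A : Matrix n m₁ R} {B : Matrix n m₂ R}
    (hspan : LinearMap.range A.mulVecLin ⊔ LinearMap.range B.mulVecLin = ⊤)
    (hA : C * A = D * A) (hB : C * B = D * B) : C = D := by
  have hlocus : LinearMap.eqLocus C.mulVecLin D.mulVecLin = ⊤ := by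
    refine top_le_iff.1 (hspan ▸ sup_le ?_ ?_)
    · rintro _ ⟨a, rfl⟩
      simp [LinearMap.mem_eqLocus, mulVec_mulVec, hA]
    · rintro _ ⟨b, rfl⟩
      simp [LinearMap.mem_eqLocus, mulVec_mulVec, hB]
  exact ext_iff_mulVec.2 fun v ↦ LinearMap.congr_fun (LinearMap.eqLocus_eq_top.1 hlocus) v

theorem disjoint_range_mulVecLin_of_mul_eq_zero [CommSemiring R] [Fintype p]
    {G : Matrix p n R} {A : Matrix n m₁ R} {B : Matrix n m₂ R}
    (hA : G * A = 0) (hB : Function.Injective (G * B).mulVec) :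
    Disjoint (LinearMap.range A.mulVecLin) (LinearMap.range B.mulVecLin) := by
  rw [Submodule.disjoint_def]
  rintro _ ⟨a, rfl⟩ ⟨b, hb⟩
  simp only [mulVecLin_apply] at hb ⊢
  have hb0 : b = 0 := hB <| by
    rw [← mulVec_mulVec, hb, mulVec_mulVec, hA, zero_mulVec, mulVec_zero]
  rw [← hb, hb0, mulVec_zero]

theorem range_mulVecLin_sup_eq_top_of_mul_eq_zero [Field R] [Fintype p]
    {G : Matrix p n R} {A : Matrix n m₁ R} {B : Matrix n m₂ R}
    (hA : G * A = 0) (hB : Function.Injective (G * B).mulVec)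
    (hrank : Fintype.card n ≤ A.rank + B.rank) :
    LinearMap.range A.mulVecLin ⊔ LinearMap.range B.mulVecLin = ⊤ :=
  Submodule.eq_top_of_disjoint _ _ (by simpa [rank] using hrank)
    (disjoint_range_mulVecLin_of_mul_eq_zero hA hB)

end Matrix

theorem stmt_17 {k k₁ k₂ : ℕ} (hk : k = k₁ + k₂)
    (S : Matrix (Fin k) (Fin k) ℝ) (hS : S.PosDef)
    (G : Matrix (Fin k₂) (Fin k) ℝ) (hG : G.rank = k₂)
    (H₁ : Matrix (Fin k) (Fin k₁) ℝ) (hGH₁ : G * H₁ = 0) (hH₁ : H₁.rank = k₁)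
    (M : Matrix (Fin k₂) (Fin k₂) ℝ) (hM : IsUnit M)
    (C : Matrix (Fin k) (Fin k) ℝ)
    (hCH₁ : C * H₁ = 0) (hCS : C * (S * Gᵀ * M) = S * Gᵀ * M) :
    C = S * Gᵀ * (G * S * Gᵀ)⁻¹ * G := by
  have hGSG : (G * S * Gᵀ).PosDef := by
    simpa using hS.mul_mul_conjTranspose_same (G.vecMul_injective_of_rank_eq_card (by simpa))
  have hrank : (S * Gᵀ).rank = k₂ := by
    rw [rank_mul_eq_right_of_isUnit_det _ _ ((isUnit_iff_isUnit_det S).1 hS.isUnit),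
      rank_transpose, hG]
  have hspan : LinearMap.range H₁.mulVecLin ⊔ LinearMap.range (S * Gᵀ).mulVecLin = ⊤ :=
    range_mulVecLin_sup_eq_top_of_mul_eq_zero hGH₁
      (by rw [← Matrix.mul_assoc]; exact mulVec_injective_iff_isUnit.2 hGSG.isUnit)
      (by simp [hH₁, hrank, hk])
  have hCSG : C * (S * Gᵀ) = S * Gᵀ := by
    have hMdet : IsUnit M.det := (isUnit_iff_isUnit_det M).1 hM
    rw [← mul_nonsing_inv_cancel_right M (C * (S * Gᵀ)) hMdet, Matrix.mul_assoc C, hCS,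
      mul_nonsing_inv_cancel_right M _ hMdet]
  refine eq_of_mul_eq_mul_of_range_sup_eq_top hspan ?_ ?_
  · rw [hCH₁, Matrix.mul_assoc, hGH₁, Matrix.mul_zero]
  · rw [hCSG]
    calc S * Gᵀ = S * Gᵀ * ((G * S * Gᵀ)⁻¹ * (G * S * Gᵀ)) := by
          rw [nonsing_inv_mul _ ((isUnit_iff_isUnit_det _).1 hGSG.isUnit), Matrix.mul_one]
      _ = S * Gᵀ * (G * S * Gᵀ)⁻¹ * G * (S * Gᵀ) := by simp only [Matrix.mul_assoc]
end

section
/- Let Σ be positive definite with blocks Σ₁₁, Σ₁₂, Σ₂₁, Σ₂₂, let G₂ be an invertible k₂×k₂ matrix and r ∈ ℝ^{k₂}. Set G = (Σ₂₁Σ₁₁⁻¹, G₂), μ₂ = G₂⁻¹(r − Σ₂₁Σ₁₁⁻¹ μ₁), and Σ̃₂₂ = G₂⁻¹(Σ₂₂ − Σ₂₁Σ₁₁⁻¹Σ₁₂)(G₂⁻¹)ᵀ. Then for any x with G x = r, writing x = (x₁, x₂): (x₁ − μ₁)ᵀ Σ₁₁⁻¹ (x₁ − μ₁) + (x₂ −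 μ₂)ᵀ Σ̃₂₂⁻¹ (x₂ − μ₂) = (x₁ − μ₁)ᵀ (Σ₁₁ − Σ₁₂Σ₂₂⁻¹Σ₂₁)⁻¹ (x₁ − μ₁). -/
/-!
On the constraint set, `G₂ (x₂ - μ₂) = -w` with `w = Σ₂₁Σ₁₁⁻¹ (x₁ - μ₁)`, and
`Σ̃₂₂⁻¹ = G₂ᵀ S⁻¹ G₂` for the Schur complement `S = Σ₂₂ - Σ₂₁Σ₁₁⁻¹Σ₁₂`; so the second quadratic
form is `wᵀ S⁻¹ w`. The Woodbury identity
`(Σ₁₁ - Σ₁₂Σ₂₂⁻¹Σ₂₁)⁻¹ = Σ₁₁⁻¹ + Σ₁₁⁻¹Σ₁₂ S⁻¹ Σ₂₁Σ₁₁⁻¹` splits the right-hand side into exactly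
these two terms.
-/

open Matrix
open scoped ComplexOrder

namespace Matrix

section CommRing

variable {m n R : Type*} [Fintype m] [Fintype n] [CommRing R]

theorem inv_sub_mul_inv_mul_eq [DecidableEq m] [DecidableEq n] {A : Matrix m m R}
    {B : Matrix m n R} {C : Matrix n m R} {D : Matrix n n R} (hA : IsUnit A) (hD : IsUnit D)
    (hS : IsUnit (D - C * A⁻¹ * B)) :
    (A - B * D⁻¹ * C)⁻¹ = A⁻¹ + A⁻¹ * B * (D - C * A⁻¹ * B)⁻¹ * C * A⁻¹ := by
  have hD' : D⁻¹⁻¹ + C * A⁻¹ * -B = D - C * A⁻¹ * B := by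
    rw [nonsing_inv_nonsing_inv _ ((isUnit_iff_isUnit_det D).mp hD), Matrix.mul_neg,
      sub_eq_add_neg]
  have := add_mul_mul_inv_eq_sub A (-B) D⁻¹ C hA (isUnit_nonsing_inv_iff.mpr hD) (hD' ▸ hS)
  rw [hD', Matrix.neg_mul, Matrix.neg_mul, ← sub_eq_add_neg] at this
  rw [this]
  simp only [Matrix.mul_neg, Matrix.neg_mul, sub_neg_eq_add]

theorem inv_nonsing_inv_mul_mul_transpose [DecidableEq n] {G : Matrix n n R} (hG : IsUnit G)
    (S : Matrix n n R) :
    (G⁻¹ * S * G⁻¹ᵀ)⁻¹ = Gᵀ * S⁻¹ * G := by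
  have hdet := (isUnit_iff_isUnit_det G).mp hG
  rw [Matrix.mul_inv_rev, Matrix.mul_inv_rev, transpose_nonsing_inv,
    nonsing_inv_nonsing_inv _ (by rwa [det_transpose]), nonsing_inv_nonsing_inv _ hdet,
    Matrix.mul_assoc]

theorem dotProduct_transpose_mul_mul_mulVec (K : Matrix m n R) (S : Matrix m m R) (u w : n → R) :
    u ⬝ᵥ ((Kᵀ * S * K) *ᵥ w) = (K *ᵥ u) ⬝ᵥ (S *ᵥ (K *ᵥ w)) := by
  rw [← mulVec_mulVec, ← mulVec_mulVec, dotProduct_mulVec, vecMul_transpose]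

theorem dotProduct_inv_sub_mul_inv_mul_transpose_mulVec [DecidableEq m] [DecidableEq n]
    {A : Matrix m m R} {B : Matrix m n R} {D : Matrix n n R} (hA : A.IsSymm)
    (hAu : IsUnit A) (hD : IsUnit D) (hS : IsUnit (D - Bᵀ * A⁻¹ * B)) (u : m → R) :
    u ⬝ᵥ ((A - B * D⁻¹ * Bᵀ)⁻¹ *ᵥ u) =
      u ⬝ᵥ (A⁻¹ *ᵥ u) +
        ((Bᵀ * A⁻¹) *ᵥ u) ⬝ᵥ ((D - Bᵀ * A⁻¹ * B)⁻¹ *ᵥ ((Bᵀ * A⁻¹) *ᵥ u)) := by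
  have hK : (Bᵀ * A⁻¹)ᵀ = A⁻¹ * B := by
    rw [transpose_mul, transpose_transpose, transpose_nonsing_inv, hA.eq]
  rw [inv_sub_mul_inv_mul_eq hAu hD hS, add_mulVec, dotProduct_add,
    ← dotProduct_transpose_mul_mul_mulVec, hK]
  simp only [Matrix.mul_assoc]

end CommRing

section PosDef

variable {m n 𝕜 : Type*} [RCLike 𝕜] {A : Matrix m m 𝕜} {B : Matrix m n 𝕜} {D : Matrix n n 𝕜}

theorem PosDef.of_fromBlocks₁₁ (h : (fromBlocks A B Bᴴ D).PosDef) : A.PosDef :=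
  h.submatrix Sum.inl_injective

theorem PosDef.of_fromBlocks₂₂ (h : (fromBlocks A B Bᴴ D).PosDef) : D.PosDef :=
  h.submatrix Sum.inr_injective

theorem PosDef.schur_complement₁₁ [Fintype m] [Fintype n] [DecidableEq m] [DecidableEq n]
    (h : (fromBlocks A B Bᴴ D).PosDef) : (D - Bᴴ * A⁻¹ * B).PosDef := by
  have hA := h.of_fromBlocks₁₁
  have := hA.isUnit.invertible
  refine ((PosDef.fromBlocks₁₁ B D hA).mp h.posSemidef).posDef_iff_isUnit.mpr ?_
  simpa only [invOf_eq_nonsing_inv] using isUnit_fromBlocks_iff_of_invertible₁₁.mp h.isUnit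

end PosDef

end Matrix

theorem stmt_19 {k₁ k₂ : ℕ}
    (S11 : Matrix (Fin k₁) (Fin k₁) ℝ) (S12 : Matrix (Fin k₁) (Fin k₂) ℝ)
    (S22 : Matrix (Fin k₂) (Fin k₂) ℝ)
    (hS : (fromBlocks S11 S12 S12ᵀ S22).PosDef)
    (G₂ : Matrix (Fin k₂) (Fin k₂) ℝ) (hG₂ : IsUnit G₂)
    (r : Fin k₂ → ℝ) (μ₁ : Fin k₁ → ℝ) (μ₂ : Fin k₂ → ℝ)
    (hμ₂ : μ₂ = G₂⁻¹ *ᵥ (r - (S12ᵀ * S11⁻¹) *ᵥ μ₁))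
    (St22 : Matrix (Fin k₂) (Fin k₂) ℝ)
    (hSt22 : St22 = G₂⁻¹ * (S22 - S12ᵀ * S11⁻¹ * S12) * (G₂⁻¹)ᵀ)
    (x₁ : Fin k₁ → ℝ) (x₂ : Fin k₂ → ℝ)
    (hx : (S12ᵀ * S11⁻¹) *ᵥ x₁ + G₂ *ᵥ x₂ = r) :
    (x₁ - μ₁) ⬝ᵥ (S11⁻¹ *ᵥ (x₁ - μ₁)) + (x₂ - μ₂) ⬝ᵥ (St22⁻¹ *ᵥ (x₂ - μ₂)) =
      (x₁ - μ₁) ⬝ᵥ ((S11 - S12 * S22⁻¹ * S12ᵀ)⁻¹ *ᵥ (x₁ - μ₁)) := by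
  rw [← conjTranspose_eq_transpose_of_trivial] at hS
  have hA := hS.of_fromBlocks₁₁
  have hSchur := hS.schur_complement₁₁
  rw [conjTranspose_eq_transpose_of_trivial] at hSchur
  have hv : G₂ *ᵥ (x₂ - μ₂) = -((S12ᵀ * S11⁻¹) *ᵥ (x₁ - μ₁)) := by
    rw [hμ₂, mulVec_sub, mulVec_mulVec, mul_nonsing_inv _ ((isUnit_iff_isUnit_det G₂).mp hG₂),
      one_mulVec, ← hx, mulVec_sub]
    abel
  rw [hSt22, inv_nonsing_inv_mul_mul_transpose hG₂, dotProduct_transpose_mul_mul_mulVec, hv,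
    dotProduct_inv_sub_mul_inv_mul_transpose_mulVec (isHermitian_iff_isSymm.mp hA.isHermitian)
      hA.isUnit hS.of_fromBlocks₂₂.isUnit hSchur.isUnit, mulVec_neg, neg_dotProduct_neg]
end
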